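/- arXiv:0907.1049 — 2 statements merged into one kernel-verified Lean document; each statement's English description precedes it below -/
import Mathlib

section
/- For every n ≥ 1 and every fixed-point-free involution π of {1,...,2n}, one has 0 ≤ r(π) ≤ n², where r(π) = n² − Σ_{i < π(i)} (π(i) − i − #{k : i < k < π(i), π(k) < i}). -/
open Finset

/-- Build a permutation from a self-inverse function (one-line notation, 0-indexed). -/
def invOfFun {N : ℕ} (f : Fin N → Fin N) (h : ∀ i, f (f i) = i) : Equiv.Perm (Fin N) :=
  ⟨f, f, h, h⟩

/-- The rank function r(π) = n² − Σ_{i<π(i)} (π(i) − i − #{k : i<k<π(i), π(k)<i}). -/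
def rk (n : ℕ) (π : Equiv.Perm (Fin (2*n))) : ℤ :=
  (n:ℤ)^2 - ∑ i : Fin (2*n), if (i:ℕ) < (π i : ℕ) then
    ((π i : ℕ) : ℤ) - ((i:ℕ) : ℤ) -
      ((univ.filter fun k : Fin (2*n) =>
        (i:ℕ) < (k:ℕ) ∧ (k:ℕ) < (π i : ℕ) ∧ (π k : ℕ) < (i:ℕ)).card : ℤ)
  else 0

/-- Bruhat order on permutations of Fin N, via the counting (Proctor/Ehresmann) criterion:
x ≤ y iff every prefix of x has at least as many values below any threshold as that of y. -/
def bruhatLE {N : ℕ} (x y : Equiv.Perm (Fin N)) : Prop :=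
  ∀ i k : Fin N, (univ.filter fun l : Fin N => l ≤ i ∧ (y l : ℕ) < (k:ℕ)).card ≤
    (univ.filter fun l : Fin N => l ≤ i ∧ (x l : ℕ) < (k:ℕ)).card

instance {N : ℕ} (x y : Equiv.Perm (Fin N)) : Decidable (bruhatLE x y) := by
  unfold bruhatLE; infer_instance

/-- `revLE μ π` : μ ≤ π in the *reverse* Bruhat order. -/
def revLE {N : ℕ} (μ π : Equiv.Perm (Fin N)) : Prop := bruhatLE π μ

instance {N : ℕ} (x y : Equiv.Perm (Fin N)) : Decidable (revLE x y) := by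
  unfold revLE; infer_instance

/-- Involution-pattern inclusion: π includes pattern μ via a strictly increasing,
π-stable family of indices realizing the same relative order. -/
def includesPattern {N M : ℕ} (π : Equiv.Perm (Fin N)) (μ : Equiv.Perm (Fin M)) : Prop :=
  ∃ ι : Fin M → Fin N, StrictMono ι ∧ (∀ j, ∃ k, π (ι j) = ι k) ∧
    ∀ j k, (π (ι j) : ℕ) < (π (ι k) : ℕ) ↔ (μ j : ℕ) < (μ k : ℕ)

/-!
Call `i` an opener if `i < π i`. For an opener `i`, every position strictly inside the arc
`(i, π i)` has its partner either left of `i` (these are subtracted in `r`) or right of `i`,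
so the `i`-th summand of `r` is `1 + D i`, with `D i` the number of the latter. A position `k`
counted by `D i` yields an ordered pair of distinct openers, `(i, k)` if `k` opens and
`(π k, i)` if `k` closes (as `π` has no fixed points), and this assignment is injective.
Hence the sum is at most `m + m (m - 1) = m²`, where `m ≤ n` is the number of openers.
-/

namespace Involution

variable {N : ℕ} (π : Equiv.Perm (Fin N))

def openers : Finset (Fin N) := {i | i < π i}

def leftCrossCount (i : Fin N) : ℕ := #{k ∈ Ioo i (π i) | π k < i}

def rightPartnerCount (i : Fin N) : ℕ := #{k ∈ Ioo i (π i) | i < π k}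

variable {π}

lemma mem_openers {i : Fin N} : i ∈ openers π ↔ i < π i := by
  simp [openers]

lemma two_mul_card_openers_le (hπ : Function.Involutive π) : 2 * #(openers π) ≤ N := by
  have hdisj : Disjoint (openers π) ((openers π).map π.toEmbedding) := by
    refine disjoint_left.2 fun i hi hi' => ?_
    obtain ⟨j, hj, rfl⟩ := mem_map.1 hi'
    rw [mem_openers, Equiv.toEmbedding_apply, hπ j] at hi
    exact lt_asymm hi (mem_openers.1 hj)
  have := card_le_univ ((openers π) ∪ (openers π).map π.toEmbedding)
  rw [card_union_of_disjoint hdisj, card_map, Fintype.card_fin] at this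
  omega

lemma val_sub_val_sub_leftCrossCount (hπ : Function.Involutive π) {i : Fin N}
    (hi : i < π i) :
    ((π i : ℕ) : ℤ) - (i : ℕ) - leftCrossCount π i = 1 + rightPartnerCount π i := by
  have hsplit : #{k ∈ Ioo i (π i) | ¬ π k < i} = rightPartnerCount π i := by
    refine congrArg card (filter_congr fun k hk => ?_)
    rw [mem_Ioo] at hk
    refine not_lt.trans ⟨fun hle => hle.lt_of_ne fun heq => ?_, le_of_lt⟩
    rw [heq, hπ k] at hk
    exact lt_irrefl _ hk.2
  have hcard := card_filter_add_card_filter_not (s := Ioo i (π i)) (fun k => π k < i)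
  rw [Fin.card_Ioo, hsplit] at hcard
  have : (i : ℕ) < π i := hi
  unfold leftCrossCount
  omega

lemma sum_rightPartnerCount_le (hπ : Function.Involutive π) (hfix : ∀ i, π i ≠ i) :
    ∑ i ∈ openers π, rightPartnerCount π i ≤ #(openers π).offDiag := by
  simp only [rightPartnerCount, ← card_sigma]
  refine card_le_card_of_injOn
    (fun p => if p.2 < π p.2 then (p.1, p.2) else (π p.2, p.1)) ?_ ?_
  · rintro ⟨i, k⟩ hik
    simp only [coe_sigma, Set.mem_sigma_iff, mem_coe, mem_filter, mem_Ioo, mem_openers] at hik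
    obtain ⟨hi, ⟨hik, hki⟩, hπk⟩ := hik
    dsimp only
    split_ifs with hk
    · simp only [coe_offDiag, Set.mem_offDiag, mem_coe, mem_openers]
      exact ⟨hi, hk, hik.ne⟩
    · simp only [coe_offDiag, Set.mem_offDiag, mem_coe, mem_openers, hπ k]
      exact ⟨(not_lt.1 hk).lt_of_ne (hfix k), hi, hπk.ne'⟩
  · rintro ⟨i, k⟩ hik ⟨i', k'⟩ hik' heq
    simp only [coe_sigma, Set.mem_sigma_iff, mem_coe, mem_filter, mem_Ioo] at hik hik'
    obtain ⟨-, ⟨hik, hki⟩, hπk⟩ := hik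
    obtain ⟨-, ⟨hik', hki'⟩, hπk'⟩ := hik'
    dsimp only at heq
    split_ifs at heq with hk hk' hk' <;> obtain ⟨h1, h2⟩ := Prod.mk.inj heq
    · rw [h1, h2]
    · rw [← h1, ← h2] at hπk'
      exact (lt_asymm hik hπk').elim
    · rw [h1, h2] at hπk
      exact (lt_asymm hik' hπk).elim
    · rw [π.injective h1, h2]

lemma rk_eq_sq_sub (n : ℕ) (π : Equiv.Perm (Fin (2 * n))) (hπ : Function.Involutive π) :
    rk n π = n ^ 2 - (#(openers π) + ∑ i ∈ openers π, rightPartnerCount π i : ℕ) := by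
  rw [rk, ← sum_filter]
  refine congrArg _ ?_
  push_cast
  rw [card_eq_sum_ones, Nat.cast_sum, ← sum_add_distrib]
  refine sum_congr rfl fun i hi => ?_
  have hcross :
      #{k : Fin (2 * n) | (i : ℕ) < k ∧ (k : ℕ) < π i ∧ (π k : ℕ) < i} = leftCrossCount π i := by
    refine congrArg card (ext fun k => ?_)
    simp [mem_Ioo, and_assoc]
  rw [hcross, val_sub_val_sub_leftCrossCount hπ (mem_openers.1 hi), Nat.cast_one]

end Involution

open Involution in
/-- For every n ≥ 1, every fixed-point-free involution π of {1,...,2n} satisfies 0 ≤ r(π) ≤ n². -/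
theorem stmt_5 : ∀ n : ℕ, 1 ≤ n → ∀ π : Equiv.Perm (Fin (2*n)),
    (∀ i, π (π i) = i) → (∀ i, π i ≠ i) →
    0 ≤ rk n π ∧ rk n π ≤ (n:ℤ)^2 := by
  intro n _ π hπ hfix
  have hm := two_mul_card_openers_le hπ
  have hsum := sum_rightPartnerCount_le hπ hfix
  rw [offDiag_card] at hsum
  rw [rk_eq_sq_sub n π hπ]
  generalize #(openers π) = m, ∑ i ∈ openers π, rightPartnerCount π i = s at *
  have hbound : m + s ≤ n ^ 2 :=
    calc m + s ≤ m * m := by have := Nat.le_mul_self m; omega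
      _ ≤ n ^ 2 := by rw [sq]; exact Nat.mul_le_mul (by omega) (by omega)
  have := Nat.cast_le (α := ℤ).2 hbound
  push_cast at this ⊢
  constructor <;> linarith
end

section
/- Let μ ≤ π be fixed-point-free involutions of {1,...,2n} (reverse Bruhat order) both flipping indices a < d; let μ', π' be obtained by deleting positions a, d and renumbering. If the number of transpositions t' with t'μ't' ≠ μ' and μ' ≤ t'μ't' ≤ π' exceeds r(π') − r(μ'), then the number of transpositions t with tμt ≠ μ and μ ≤ tμt ≤ π exceeds r(π) − r(μ). -/
open Finset

/-- The degree of μ in the Bruhat graph BG_{μ,π}: the number of transpositions t with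
tμt ≠ μ and μ ≤ tμt ≤ π in reverse Bruhat order. -/
def deg {N : ℕ} (μ π : Equiv.Perm (Fin N)) : ℕ :=
  (univ.filter fun p : Fin N × Fin N => p.1 < p.2 ∧
    Equiv.swap p.1 p.2 * μ * Equiv.swap p.1 p.2 ≠ μ ∧
    revLE μ (Equiv.swap p.1 p.2 * μ * Equiv.swap p.1 p.2) ∧
    revLE (Equiv.swap p.1 p.2 * μ * Equiv.swap p.1 p.2) π).card

/-!
Deleting the common arc `(a, d)` is compatible with the Bruhat order: in the prefix-count
criterion the arc contributes the same amount to the counts of `μ` and of `π`, so every edge of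
`BG_{μ',π'}` at `μ'` lifts to an edge at `μ`. The ranks are related by
`r(x) = r(x') + 2n + 1 - (d - a) - 2 e(x)`, where `e(x)` counts the arcs of `x` enclosing `(a, d)`,
so the claim reduces to finding `2 (e(μ) - e(π))` further edges at `μ`.

For an enclosing arc `(p, q)` of `μ`, the transpositions `(p a)` and `(d q)` conjugate `μ` to the
same involution `ν`, and `ν` raises the prefix counts of `μ` by one exactly on the rectangles
`(p, a] × (d, q]` and its transpose. So `ν ≤ π` unless some count of `μ` and `π` agrees on that
rectangle; call such an arc tight. Choosing the last row and then the first column where the counts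
agree, an induction bounds the number of tight arcs by `e(π)`, which leaves at least
`e(μ) - e(π)` arcs contributing two edges each.
-/

namespace BruhatGraph

open Equiv Function

section PrefixCount

variable {N : ℕ}

-- Cut-offs range over `ℕ` rather than `Fin N` so that empty prefixes are available; this is what
-- lets the criterion pass through `below` in `bruhatLE_delete_iff`.
def prefixCount (x : Perm (Fin N)) (i k : ℕ) : ℕ :=
  #{l : Fin N | (l : ℕ) < i ∧ (x l : ℕ) < k}

theorem prefixCount_succ (x : Perm (Fin N)) (i : Fin N) (k : ℕ) :
    prefixCount x (i + 1) k = #{l : Fin N | l ≤ i ∧ (x l : ℕ) < k} := by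
  simp only [prefixCount, Nat.lt_succ_iff, Fin.val_fin_le]

theorem prefixCount_min_left (x : Perm (Fin N)) (i k : ℕ) :
    prefixCount x (min i N) k = prefixCount x i k := by
  simp only [prefixCount, lt_min_iff, Fin.is_lt, and_true]

theorem prefixCount_min_right (x : Perm (Fin N)) (i k : ℕ) :
    prefixCount x i (min k N) = prefixCount x i k := by
  simp only [prefixCount, lt_min_iff, Fin.is_lt, and_true]

theorem prefixCount_of_le (x : Perm (Fin N)) (i : ℕ) {k : ℕ} (hk : N ≤ k) :
    prefixCount x i k = min N i := by
  rw [← Fin.card_filter_val_lt, prefixCount]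
  congr 1
  ext l
  simpa using fun _ => (x l).is_lt.trans_le hk

theorem bruhatLE_iff_prefixCount (x y : Perm (Fin N)) :
    bruhatLE x y ↔ ∀ i k : ℕ, prefixCount y i k ≤ prefixCount x i k := by
  refine ⟨fun h i k => ?_, fun h i k => by simpa only [prefixCount_succ] using h (i + 1) k⟩
  rcases Nat.eq_zero_or_pos i with rfl | hi
  · simp [prefixCount]
  rcases lt_or_ge k N with hk | hk
  · have hlast : min i N - 1 + 1 = min i N := by omega
    have := h ⟨min i N - 1, by omega⟩ ⟨k, hk⟩
    rwa [← prefixCount_succ, ← prefixCount_succ, Fin.val_mk, hlast, prefixCount_min_left,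
      prefixCount_min_left] at this
  · rw [prefixCount_of_le _ _ hk, prefixCount_of_le _ _ hk]

theorem prefixCount_comm {x : Perm (Fin N)} (hx : Involutive x) (i k : ℕ) :
    prefixCount x i k = prefixCount x k i :=
  card_nbij' x x (fun l hl => by simp_all [hx l]) (fun l hl => by simp_all [hx l])
    (fun l _ => hx l) (fun l _ => hx l)

end PrefixCount

section Deletion

variable {m N : ℕ}

structure IsPairDeletion (ι : Fin m → Fin N) (a d : Fin N) : Prop where
  strictMono : StrictMono ι
  range_eq : Set.range ι = {a, d}ᶜ
  lt : a < d

structure DeletesArc (ι : Fin m → Fin N) (a d : Fin N) (x : Perm (Fin N)) (x' : Perm (Fin m)) :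
    Prop where
  apply_left : x a = d
  apply_right : x d = a
  apply_comp : ∀ j, x (ι j) = ι (x' j)

variable {a d : Fin N} {ι : Fin m → Fin N}

theorem isPairDeletion_of_card (hN : N = m + 2) (hι : StrictMono ι)
    (havoid : ∀ j, ι j ≠ a ∧ ι j ≠ d) (had : a < d) : IsPairDeletion ι a d := by
  refine ⟨hι, ?_, had⟩
  have hsub : univ.map ⟨ι, hι.injective⟩ ⊆ ({a, d}ᶜ : Finset (Fin N)) := by
    simpa [subset_iff] using havoid
  have heq := eq_of_subset_of_card_le hsub (by
    rw [card_map, card_univ, card_compl, card_pair had.ne]; simp [hN])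
  ext v
  simpa using congrArg (v ∈ ·) heq

namespace IsPairDeletion

theorem apply_ne (h : IsPairDeletion ι a d) (j : Fin m) : ι j ≠ a ∧ ι j ≠ d := by
  simpa using (h.range_eq ▸ Set.mem_range_self j : ι j ∈ ({a, d}ᶜ : Set (Fin N)))

theorem sum_eq (h : IsPairDeletion ι a d) {M : Type*} [AddCommMonoid M] (f : Fin N → M) :
    ∑ v, f v = ∑ j, f (ι j) + (f a + f d) := by
  rw [← sum_compl_add_sum {a, d}, sum_pair h.lt.ne]
  have hcompl : ({a, d}ᶜ : Finset (Fin N)) = univ.map ⟨ι, h.strictMono.injective⟩ := by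
    ext v
    simp only [mem_compl, mem_map, mem_univ, true_and, Embedding.coeFn_mk, ← Set.mem_range,
      h.range_eq]
    simp
  rw [hcompl, sum_map]
  rfl

theorem card_filter_eq (h : IsPairDeletion ι a d) (P : Fin N → Prop) [DecidablePred P] :
    #{v | P v} = #{j | P (ι j)} + ((if P a then 1 else 0) + (if P d then 1 else 0)) := by
  simp only [card_filter]
  exact h.sum_eq _

end IsPairDeletion

variable (ι) in
def below (K : ℕ) : ℕ := #{j | (ι j : ℕ) < K}

theorem lt_below_iff (hι : Monotone ι) (j : Fin m) (K : ℕ) :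
    (j : ℕ) < below ι K ↔ (ι j : ℕ) < K :=
  Fin.lt_card_filter_univ_iff_apply_of_imp _ fun _ _ hji h => Nat.lt_of_le_of_lt (hι hji) h

theorem below_apply (hι : StrictMono ι) (j : Fin m) : below ι (ι j) = j := by
  simp only [below, Fin.val_fin_lt, hι.lt_iff_lt]
  simpa using Fin.card_filter_val_lt (n := m) (m := j)

theorem below_of_le {K : ℕ} (hK : N ≤ K) : below ι K = m := by
  simp [below, fun j => (ι j).is_lt.trans_le hK]

theorem exists_below_eq (hι : StrictMono ι) {c : ℕ} (hc : c ≤ m) : ∃ K, below ι K = c := by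
  rcases hc.lt_or_eq with hc | rfl
  · exact ⟨ι ⟨c, hc⟩, below_apply hι _⟩
  · exact ⟨N, below_of_le le_rfl⟩

theorem prefixCount_delete (h : IsPairDeletion ι a d) {x : Perm (Fin N)} {x' : Perm (Fin m)}
    (hx : DeletesArc ι a d x x') (i k : ℕ) :
    prefixCount x i k = prefixCount x' (below ι i) (below ι k) +
      ((if (a : ℕ) < i ∧ (d : ℕ) < k then 1 else 0) +
        (if (d : ℕ) < i ∧ (a : ℕ) < k then 1 else 0)) := by
  rw [prefixCount, h.card_filter_eq, hx.apply_left, hx.apply_right]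
  simp only [hx.apply_comp, ← lt_below_iff h.strictMono.monotone, prefixCount]

theorem bruhatLE_delete_iff (h : IsPairDeletion ι a d) {x y : Perm (Fin N)}
    {x' y' : Perm (Fin m)} (hx : DeletesArc ι a d x x') (hy : DeletesArc ι a d y y') :
    bruhatLE x y ↔ bruhatLE x' y' := by
  simp only [bruhatLE_iff_prefixCount, prefixCount_delete h hx, prefixCount_delete h hy,
    add_le_add_iff_right]
  refine ⟨fun hle i k => ?_, fun hle i k => hle _ _⟩
  obtain ⟨i', hi'⟩ := exists_below_eq h.strictMono (min_le_right i m)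
  obtain ⟨k', hk'⟩ := exists_below_eq h.strictMono (min_le_right k m)
  simpa only [hi', hk', prefixCount_min_left, prefixCount_min_right] using hle i' k'

end Deletion

section Rank

variable {N : ℕ}

def leftCrossings (x : Perm (Fin N)) (i : Fin N) : ℕ :=
  #{k : Fin N | (i : ℕ) < k ∧ (k : ℕ) < x i ∧ (x k : ℕ) < i}

def arcWeight (x : Perm (Fin N)) (i : Fin N) : ℤ :=
  if (i : ℕ) < x i then ((x i : ℕ) : ℤ) - (i : ℕ) - leftCrossings x i else 0

theorem rk_eq_sub_sum_arcWeight (n : ℕ) (x : Perm (Fin (2 * n))) :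
    rk n x = n ^ 2 - ∑ i, arcWeight x i := rfl

def enclosingArcs (a d : Fin N) (x : Perm (Fin N)) : Finset (Fin N) := {p | p < a ∧ d < x p}

theorem card_filter_lt_lt_add_one {lo hi : Fin N} (h : lo < hi) :
    (#{v : Fin N | lo < v ∧ v < hi} : ℤ) + 1 = (hi : ℕ) - (lo : ℕ) := by
  have : #{v : Fin N | lo < v ∧ v < hi} = hi - lo - 1 := by
    rw [← Fin.card_Ioo]
    congr 1
    ext v
    simp
  omega

variable {m : ℕ} {a d : Fin N} {ι : Fin m → Fin N} {x : Perm (Fin N)} {x' : Perm (Fin m)}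

theorem DeletesArc.involutive (hx : DeletesArc ι a d x x') (hι : Injective ι)
    (hinv : Involutive x) : Involutive x' :=
  fun j => hι (by rw [← hx.apply_comp, ← hx.apply_comp, hinv])

theorem arcWeight_comp (h : IsPairDeletion ι a d) (hx : DeletesArc ι a d x x') (j : Fin m) :
    arcWeight x (ι j) = arcWeight x' j +
      ((if ι j < a ∧ a < ι (x' j) ∧ ι (x' j) < d then 1 else 0) +
        2 * (if ι j < a ∧ d < ι (x' j) then 1 else 0)) := by
  have hlt : ∀ {i j : Fin m}, ι i < ι j ↔ i < j := h.strictMono.lt_iff_lt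
  obtain ⟨hja, hjd⟩ := h.apply_ne j
  obtain ⟨hxja, hxjd⟩ := h.apply_ne (x' j)
  have had := h.lt
  by_cases hj : j < x' j
  swap
  · have : ¬ ι j < ι (x' j) := by rwa [hlt]
    simp only [arcWeight, hx.apply_comp, Fin.val_fin_lt, this, hj, if_false]
    split_ifs <;> omega
  have hιj : ι j < ι (x' j) := h.strictMono hj
  have hlength := card_filter_lt_lt_add_one hιj
  have hlength' := card_filter_lt_lt_add_one hj
  rw [h.card_filter_eq] at hlength
  simp only [hlt] at hlength
  have hcross : leftCrossings x (ι j) = leftCrossings x' j +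
      (if ι j < d ∧ d < ι (x' j) ∧ a < ι j then 1 else 0) := by
    simp only [leftCrossings, Fin.val_fin_lt]
    rw [h.card_filter_eq]
    simp only [hx.apply_comp, hx.apply_left, hx.apply_right, hlt]
    split_ifs <;> omega
  simp only [arcWeight, hx.apply_comp, Fin.val_fin_lt, hιj, hj, if_true, hcross]
  split_ifs at hlength ⊢ <;> push_cast at hlength hlength' ⊢ <;> omega

theorem leftCrossings_left (h : IsPairDeletion ι a d) (hx : DeletesArc ι a d x x')
    (hinv : Involutive x) :
    leftCrossings x a = #{j | ι j < a ∧ a < ι (x' j) ∧ ι (x' j) < d} := by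
  have hinv' := hx.involutive h.strictMono.injective hinv
  simp only [leftCrossings, Fin.val_fin_lt, hx.apply_left]
  rw [h.card_filter_eq]
  simp only [hx.apply_comp, hx.apply_left, hx.apply_right, lt_irrefl, false_and, and_false,
    if_false, add_zero]
  refine card_nbij' x' x' (fun l hl => ?_) (fun l hl => ?_) (fun l _ => hinv' l)
    (fun l _ => hinv' l) <;> simp_all [hinv' l]

theorem card_enclosingArcs (h : IsPairDeletion ι a d) (hx : DeletesArc ι a d x x') :
    #(enclosingArcs a d x) = #{j | ι j < a ∧ d < ι (x' j)} := by
  have had := h.lt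
  rw [enclosingArcs, h.card_filter_eq]
  simp only [hx.apply_comp, hx.apply_left, hx.apply_right, lt_irrefl, false_and, if_false]
  rw [if_neg (by omega)]
  rfl

theorem sum_arcWeight_delete (h : IsPairDeletion ι a d) (hx : DeletesArc ι a d x x')
    (hinv : Involutive x) :
    ∑ i, arcWeight x i =
      ∑ j, arcWeight x' j + (((d : ℕ) : ℤ) - (a : ℕ)) + 2 * #(enclosingArcs a d x) := by
  have had := h.lt
  have hleft : arcWeight x a = ((d : ℕ) : ℤ) - (a : ℕ) - leftCrossings x a := by
    simp [arcWeight, hx.apply_left, had]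
  have hright : arcWeight x d = 0 := by
    simp [arcWeight, hx.apply_right, had.le]
  rw [h.sum_eq, hleft, hright, leftCrossings_left h hx hinv, card_enclosingArcs h hx]
  simp only [arcWeight_comp h hx, sum_add_distrib, ← mul_sum, sum_boole]
  ring

theorem rk_delete {n : ℕ} {a d : Fin (2 * (n + 1))} {ι : Fin (2 * n) → Fin (2 * (n + 1))}
    {x : Perm (Fin (2 * (n + 1)))} {x' : Perm (Fin (2 * n))} (h : IsPairDeletion ι a d)
    (hx : DeletesArc ι a d x x') (hinv : Involutive x) :
    rk (n + 1) x =
      rk n x' + (2 * n + 1) - (((d : ℕ) : ℤ) - (a : ℕ)) - 2 * #(enclosingArcs a d x) := by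
  rw [rk_eq_sub_sum_arcWeight, rk_eq_sub_sum_arcWeight, sum_arcWeight_delete h hx hinv]
  push_cast
  ring

end Rank

section TightArcs

variable {N : ℕ}

def bandCount (x : Perm (Fin N)) (i k k' : ℕ) : ℕ :=
  #{l : Fin N | (l : ℕ) < i ∧ k ≤ (x l : ℕ) ∧ (x l : ℕ) < k'}

theorem prefixCount_add_bandCount (x : Perm (Fin N)) (i : ℕ) {k k' : ℕ} (h : k ≤ k') :
    prefixCount x i k + bandCount x i k k' = prefixCount x i k' := by
  rw [prefixCount, bandCount, prefixCount,
    ← card_filter_add_card_filter_not (s := {l : Fin N | (l : ℕ) < i ∧ (x l : ℕ) < k'})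
      (fun l => (x l : ℕ) < k), filter_filter, filter_filter]
  congr 2 <;> ext l <;> simp only [mem_filter, mem_univ, true_and] <;> omega

theorem bandCount_mono (x : Perm (Fin N)) {i i' : ℕ} (h : i ≤ i') (k k' : ℕ) :
    bandCount x i k k' ≤ bandCount x i' k k' :=
  card_le_card <| monotone_filter_right _ fun _ _ hl => ⟨hl.1.trans_le h, hl.2⟩

variable (a d : Fin N) (x y : Perm (Fin N))

def tightArcs (I : ℕ) : Finset (Fin N) :=
  {p ∈ enclosingArcs a d y | ∃ I' ∈ Ioc (p : ℕ) I, ∃ K ∈ Ioc (d : ℕ) (y p),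
    prefixCount x I' K = prefixCount y I' K}

variable {a d x y}

theorem mem_tightArcs {I : ℕ} {p : Fin N} :
    p ∈ tightArcs a d x y I ↔ (p < a ∧ d < y p) ∧ ∃ I' K, (p : ℕ) < I' ∧ I' ≤ I ∧
      (d : ℕ) < K ∧ K ≤ y p ∧ prefixCount x I' K = prefixCount y I' K := by
  simp only [tightArcs, enclosingArcs, mem_filter, mem_univ, true_and, mem_Ioc]
  constructor
  · rintro ⟨hp, I', ⟨h1, h2⟩, K, ⟨h3, h4⟩, h5⟩
    exact ⟨hp, I', K, h1, h2, h3, h4, h5⟩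
  · rintro ⟨hp, I', K, h1, h2, h3, h4, h5⟩
    exact ⟨hp, I', ⟨h1, h2⟩, K, ⟨h3, h4⟩, h5⟩

theorem exists_lastTightCorner {I K₀ : ℕ} (hne : ∃ p ∈ tightArcs a d x y I, (y p : ℕ) < K₀) :
    ∃ I₁ K₁, I₁ ≤ I ∧ (d : ℕ) < K₁ ∧ K₁ < K₀ ∧ prefixCount x I₁ K₁ = prefixCount y I₁ K₁ ∧
      ∀ I' K, I' ≤ I → (d : ℕ) < K → K < K₀ → prefixCount x I' K = prefixCount y I' K →
        I' ≤ I₁ ∧ (I' = I₁ → K₁ ≤ K) := by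
  set rows := {I' ∈ range (I + 1) |
    ∃ K ∈ Ioo (d : ℕ) K₀, prefixCount x I' K = prefixCount y I' K}
  have hrows : rows.Nonempty := by
    obtain ⟨p, hp, hpK⟩ := hne
    obtain ⟨-, I', K, -, hI', hdK, hKp, heq⟩ := mem_tightArcs.1 hp
    refine ⟨I', mem_filter.2 ⟨mem_range.2 (by omega), K, mem_Ioo.2 ⟨hdK, by omega⟩, heq⟩⟩
  set I₁ := rows.max' hrows
  obtain ⟨hI₁, hcols⟩ := mem_filter.1 (rows.max'_mem hrows)
  set cols := {K ∈ Ioo (d : ℕ) K₀ | prefixCount x I₁ K = prefixCount y I₁ K}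
  have hcols : cols.Nonempty := by
    obtain ⟨K, hK, heq⟩ := hcols
    exact ⟨K, mem_filter.2 ⟨hK, heq⟩⟩
  obtain ⟨hK₁, heq⟩ := mem_filter.1 (cols.min'_mem hcols)
  rw [mem_range] at hI₁
  rw [mem_Ioo] at hK₁
  refine ⟨I₁, cols.min' hcols, by omega, hK₁.1, hK₁.2, heq,
    fun I' K hI' hdK hKK₀ heq' => ⟨rows.le_max' _ ?_, fun hI'eq => cols.min'_le _ ?_⟩⟩
  · exact mem_filter.2 ⟨mem_range.2 (by omega), K, mem_Ioo.2 ⟨hdK, hKK₀⟩, heq'⟩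
  · exact mem_filter.2 ⟨mem_Ioo.2 ⟨hdK, hKK₀⟩, hI'eq ▸ heq'⟩

theorem lt_and_mem_tightArcs_of_lastTightCorner {I K₀ I₁ K₁ : ℕ}
    (hlast : ∀ I' K, I' ≤ I → (d : ℕ) < K → K < K₀ → prefixCount x I' K = prefixCount y I' K →
      I' ≤ I₁ ∧ (I' = I₁ → K₁ ≤ K))
    {p : Fin N} (hp : p ∈ tightArcs a d x y I) (hpK₀ : (y p : ℕ) < K₀) :
    (p : ℕ) < I₁ ∧ ((y p : ℕ) < K₁ → p ∈ tightArcs a d x y (I₁ - 1)) := by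
  obtain ⟨hpenc, I', K, hpI', hI', hdK, hKp, heq⟩ := mem_tightArcs.1 hp
  obtain ⟨hI'I₁, hK₁K⟩ := hlast I' K hI' hdK (by omega) heq
  refine ⟨by omega, fun hpK₁ => mem_tightArcs.2 ⟨hpenc, I', K, hpI', ?_, hdK, hKp, heq⟩⟩
  have : I' ≠ I₁ := fun h => by have := hK₁K h; omega
  omega

theorem card_filter_tightArcs_le (hxy : ∀ i k, prefixCount y i k ≤ prefixCount x i k)
    (I K₀ : ℕ) (hK₀ : (d : ℕ) < K₀) :
    #{p ∈ tightArcs a d x y I | (y p : ℕ) < K₀} ≤ bandCount x I (d + 1) K₀ := by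
  induction I using Nat.strong_induction_on generalizing K₀ with
  | _ I ih =>
  by_cases hne : ∃ p ∈ tightArcs a d x y I, (y p : ℕ) < K₀
  swap
  · push Not at hne
    simp [filter_eq_empty_iff.2 fun p hp => (hne p hp).not_gt]
  obtain ⟨I₁, K₁, hI₁, hdK₁, hK₁, heq, hlast⟩ := exists_lastTightCorner hne
  have hI₁pos : 0 < I₁ := by
    obtain ⟨p, hp, hpK₀⟩ := hne
    have := (lt_and_mem_tightArcs_of_lastTightCorner hlast hp hpK₀).1
    omega
  -- Arcs with `K₁ ≤ y p` lie in the band `[K₁, K₀)` of row `I₁`, where the counts of `x` and `y`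
  -- agree below `K₁`; the others are already tight before row `I₁`.
  set S := {p ∈ tightArcs a d x y I | (y p : ℕ) < K₀}
  have hhigh : #{p ∈ S | K₁ ≤ (y p : ℕ)} ≤ bandCount y I₁ K₁ K₀ := by
    refine card_le_card fun p hp => ?_
    obtain ⟨⟨hp, hpK₀⟩, hK₁p⟩ := by simpa only [S, mem_filter] using hp
    exact mem_filter.2
      ⟨mem_univ _, (lt_and_mem_tightArcs_of_lastTightCorner hlast hp hpK₀).1, hK₁p, hpK₀⟩
  have hlow : {p ∈ S | ¬ K₁ ≤ (y p : ℕ)} ⊆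
      {p ∈ tightArcs a d x y (I₁ - 1) | (y p : ℕ) < K₁} := fun p hp => by
    obtain ⟨⟨hp, hpK₀⟩, hK₁p⟩ := by simpa only [S, mem_filter, not_le] using hp
    exact mem_filter.2 ⟨(lt_and_mem_tightArcs_of_lastTightCorner hlast hp hpK₀).2 hK₁p, hK₁p⟩
  have hband : bandCount y I₁ K₁ K₀ ≤ bandCount x I₁ K₁ K₀ := by
    have := prefixCount_add_bandCount x I₁ hK₁.le
    have := prefixCount_add_bandCount y I₁ hK₁.le
    have := hxy I₁ K₀
    omega
  calc #S = #{p ∈ S | K₁ ≤ (y p : ℕ)} + #{p ∈ S | ¬ K₁ ≤ (y p : ℕ)} :=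
        (card_filter_add_card_filter_not _).symm
    _ ≤ bandCount x I₁ K₁ K₀ + bandCount x (I₁ - 1) (d + 1) K₁ :=
        add_le_add (hhigh.trans hband)
          ((card_le_card hlow).trans (ih _ (by omega) _ hdK₁))
    _ ≤ bandCount x I₁ (d + 1) K₀ := by
        have := bandCount_mono x (Nat.sub_le I₁ 1) (d + 1) K₁
        have := prefixCount_add_bandCount x I₁ (show (d : ℕ) + 1 ≤ K₀ by omega)
        have := prefixCount_add_bandCount x I₁ (show (d : ℕ) + 1 ≤ K₁ by omega)
        have := prefixCount_add_bandCount x I₁ hK₁.le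
        omega
    _ ≤ bandCount x I (d + 1) K₀ := bandCount_mono x hI₁ _ _

theorem lt_prefixCount_of_notMem_tightArcs (hxy : ∀ i k, prefixCount y i k ≤ prefixCount x i k)
    {p : Fin N} (hp : p ∈ enclosingArcs a d y) (hnt : p ∉ tightArcs a d x y a) (I K : ℕ)
    (hpI : (p : ℕ) < I) (hIa : I ≤ a) (hdK : (d : ℕ) < K) (hKp : K ≤ y p) :
    prefixCount y I K < prefixCount x I K :=
  (hxy I K).lt_of_ne fun heq => hnt <| mem_tightArcs.2
    ⟨(mem_filter.1 hp).2, I, K, hpI, hIa, hdK, hKp, heq.symm⟩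

theorem card_tightArcs_le (hxy : ∀ i k, prefixCount y i k ≤ prefixCount x i k) :
    #(tightArcs a d x y a) ≤ #(enclosingArcs a d x) := by
  have h := card_filter_tightArcs_le (a := a) hxy a N d.is_lt
  rw [filter_true_of_mem fun p _ => (y p).is_lt] at h
  refine h.trans_eq (congrArg card ?_)
  ext l
  simp only [mem_filter, mem_univ, true_and, enclosingArcs, Fin.lt_def, (x l).is_lt,
    and_true]
  omega

theorem card_enclosingArcs_le_add (hxy : ∀ i k, prefixCount y i k ≤ prefixCount x i k) :
    #(enclosingArcs a d y) ≤
      #(enclosingArcs a d x) + #(enclosingArcs a d y \ tightArcs a d x y a) := by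
  have hsub : tightArcs a d x y a ⊆ enclosingArcs a d y := filter_subset _ _
  rw [card_sdiff_of_subset hsub]
  have := card_tightArcs_le (a := a) (d := d) hxy
  have := card_le_card hsub
  omega

end TightArcs

section SwapConj

variable {N : ℕ}

theorem prefixCount_add_sum_eq {x y : Perm (Fin N)} (s : Finset (Fin N))
    (hxy : ∀ l ∉ s, x l = y l) (i k : ℕ) :
    prefixCount x i k + ∑ l ∈ s, (if (l : ℕ) < i ∧ (y l : ℕ) < k then 1 else 0) =
      prefixCount y i k + ∑ l ∈ s, (if (l : ℕ) < i ∧ (x l : ℕ) < k then 1 else 0) := by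
  rw [prefixCount, prefixCount, card_filter, card_filter, ← sum_compl_add_sum s,
    ← sum_compl_add_sum s, sum_congr rfl fun l hl => by rw [hxy l (mem_compl.1 hl)]]
  ring

theorem ite_exchange {u v s t i k : ℕ} (huv : u < v) (hst : s < t) :
    (if u < i ∧ s < k then 1 else 0) + (if v < i ∧ t < k then 1 else 0) =
      (if u < i ∧ t < k then 1 else 0) + (if v < i ∧ s < k then 1 else 0) +
        (if u < i ∧ i ≤ v ∧ s < k ∧ k ≤ t then 1 else 0) := by
  split_ifs <;> omega

variable {y : Perm (Fin N)} {p a d q : Fin N}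

theorem swap_conj_apply (hy : Involutive y) (hpa : p < a) (had : a < d) (hdq : d < q)
    (hya : y a = d) (hyp : y p = q) (l : Fin N) :
    (swap p a * y * swap p a) l =
      if l = p then d else if l = a then q else if l = d then p else if l = q then a else y l := by
  have hyd : y d = a := by rw [← hya, hy]
  have hyq : y q = p := by rw [← hyp, hy]
  have := hy l
  simp only [Perm.mul_apply, swap_apply_def]
  split_ifs <;> grind

theorem swap_conj_eq_swap_conj (hy : Involutive y) (hpa : p < a) (had : a < d) (hdq : d < q)
    (hya : y a = d) (hyp : y p = q) : swap d q * y * swap d q = swap p a * y * swap p a := by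
  have hyd : y d = a := by rw [← hya, hy]
  have hyq : y q = p := by rw [← hyp, hy]
  ext l : 1
  have := hy l
  simp only [Perm.mul_apply, swap_apply_def]
  split_ifs <;> grind

theorem prefixCount_swap_conj (hy : Involutive y) (hpa : p < a) (had : a < d) (hdq : d < q)
    (hya : y a = d) (hyp : y p = q) (i k : ℕ) :
    prefixCount (swap p a * y * swap p a) i k = prefixCount y i k +
      ((if (p : ℕ) < i ∧ i ≤ a ∧ (d : ℕ) < k ∧ k ≤ q then 1 else 0) +
        (if (d : ℕ) < i ∧ i ≤ q ∧ (p : ℕ) < k ∧ k ≤ a then 1 else 0)) := by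
  have hyd : y d = a := by rw [← hya, hy]
  have hyq : y q = p := by rw [← hyp, hy]
  have key := prefixCount_add_sum_eq (x := swap p a * y * swap p a) (y := y) {p, a, d, q}
    (fun l hl => by
      simp only [mem_insert, mem_singleton, not_or] at hl
      simp [swap_conj_apply hy hpa had hdq hya hyp, hl]) i k
  have hnotMem : p ∉ ({a, d, q} : Finset _) ∧ a ∉ ({d, q} : Finset _) ∧ d ∉ ({q} : Finset _) := by
    simp only [mem_insert, mem_singleton]
    omega
  simp only [sum_insert hnotMem.1, sum_insert hnotMem.2.1, sum_insert hnotMem.2.2,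
    sum_singleton] at key
  have hqa := had.trans hdq
  simp only [swap_conj_apply hy hpa had hdq hya hyp, hya, hyp, hyd, hyq, if_true, hpa.ne',
    (hpa.trans had).ne', had.ne', (hpa.trans hqa).ne', hqa.ne', hdq.ne', if_false] at key
  have := ite_exchange (i := i) (k := k) (Fin.lt_def.1 hpa) (Fin.lt_def.1 hdq)
  have := ite_exchange (i := i) (k := k) (Fin.lt_def.1 hdq) (Fin.lt_def.1 hpa)
  omega

theorem swap_conj_ne (hy : Involutive y) (hpa : p < a) (had : a < d) (hdq : d < q)
    (hya : y a = d) (hyp : y p = q) : swap p a * y * swap p a ≠ y := fun h => by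
  have := congrArg (· p) h
  simp only [swap_conj_apply hy hpa had hdq hya hyp, if_true, hyp] at this
  exact hdq.ne this

theorem prefixCount_swap_conj_le {x : Perm (Fin N)} (hx : Involutive x) (hy : Involutive y)
    (hpa : p < a) (had : a < d) (hdq : d < q) (hya : y a = d) (hyp : y p = q)
    (hxy : ∀ i k, prefixCount y i k ≤ prefixCount x i k)
    (hstrict : ∀ I K : ℕ, (p : ℕ) < I → I ≤ a → (d : ℕ) < K → K ≤ q →
      prefixCount y I K < prefixCount x I K) (i k : ℕ) :
    prefixCount (swap p a * y * swap p a) i k ≤ prefixCount x i k := by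
  rw [prefixCount_swap_conj hy hpa had hdq hya hyp]
  have := hxy i k
  split_ifs with h₁ h₂ h₂
  · omega
  · have := hstrict i k h₁.1 h₁.2.1 h₁.2.2.1 h₁.2.2.2
    omega
  · have := hstrict k i h₂.2.2.1 h₂.2.2.2 h₂.1 h₂.2.1
    rw [prefixCount_comm hy, prefixCount_comm hx] at this
    omega
  · omega

end SwapConj

section Degree

variable {m N : ℕ}

def edgeTranspositions (μ π : Perm (Fin N)) : Finset (Fin N × Fin N) :=
  {t | t.1 < t.2 ∧ swap t.1 t.2 * μ * swap t.1 t.2 ≠ μ ∧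
    revLE μ (swap t.1 t.2 * μ * swap t.1 t.2) ∧ revLE (swap t.1 t.2 * μ * swap t.1 t.2) π}

theorem deg_eq_card_edgeTranspositions (μ π : Perm (Fin N)) : deg μ π = #(edgeTranspositions μ π) := rfl

variable {a d : Fin N} {ι : Fin m → Fin N}

theorem DeletesArc.swap_conj (h : IsPairDeletion ι a d) {x : Perm (Fin N)} {x' : Perm (Fin m)}
    (hx : DeletesArc ι a d x x') (j₁ j₂ : Fin m) :
    DeletesArc ι a d (swap (ι j₁) (ι j₂) * x * swap (ι j₁) (ι j₂))
      (swap j₁ j₂ * x' * swap j₁ j₂) := by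
  have hfix : ∀ v, v = a ∨ v = d → swap (ι j₁) (ι j₂) v = v := by
    rintro v hv
    refine swap_apply_of_ne_of_ne ?_ ?_ <;> rcases hv with rfl | rfl <;>
      simp [Ne.symm (h.apply_ne _).1, Ne.symm (h.apply_ne _).2]
  have hinj := h.strictMono.injective
  refine ⟨?_, ?_, fun j => ?_⟩
  · simp [hfix, hx.apply_left]
  · simp [hfix, hx.apply_right]
  · simp only [Perm.mul_apply, hinj.swap_apply, hx.apply_comp]

theorem map_mem_edgeTranspositions (h : IsPairDeletion ι a d) {μ π : Perm (Fin N)}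
    {μ' π' : Perm (Fin m)} (hμ : DeletesArc ι a d μ μ') (hπ : DeletesArc ι a d π π')
    {t : Fin m × Fin m} (ht : t ∈ edgeTranspositions μ' π') : (ι t.1, ι t.2) ∈ edgeTranspositions μ π := by
  rw [edgeTranspositions, mem_filter] at ht ⊢
  unfold revLE at ht ⊢
  obtain ⟨-, hlt, hne, hle₁, hle₂⟩ := ht
  have hν := hμ.swap_conj h t.1 t.2
  refine ⟨mem_univ _, h.strictMono hlt, fun heq => hne ?_,
    (bruhatLE_delete_iff h hν hμ).2 hle₁, (bruhatLE_delete_iff h hπ hν).2 hle₂⟩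
  ext j : 1
  apply h.strictMono.injective
  rw [← hν.apply_comp, heq, hμ.apply_comp]

theorem mem_edgeTranspositions_of_notMem_tightArcs {μ π : Perm (Fin N)} (hμ : Involutive μ) (hπ : Involutive π)
    (had : a < d) (hμa : μ a = d) (hxy : ∀ i k, prefixCount μ i k ≤ prefixCount π i k)
    {p : Fin N} (hp : p ∈ enclosingArcs a d μ \ tightArcs a d π μ a) :
    (p, a) ∈ edgeTranspositions μ π ∧ (d, μ p) ∈ edgeTranspositions μ π := by
  obtain ⟨hpenc, hnt⟩ := mem_sdiff.1 hp
  obtain ⟨hpa, hdq⟩ := (mem_filter.1 hpenc).2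
  have hν : swap p a * μ * swap p a ≠ μ ∧ revLE μ (swap p a * μ * swap p a) ∧
      revLE (swap p a * μ * swap p a) π := by
    refine ⟨swap_conj_ne hμ hpa had hdq hμa rfl, (bruhatLE_iff_prefixCount _ _).2 fun i k => ?_,
      (bruhatLE_iff_prefixCount _ _).2 <| prefixCount_swap_conj_le hπ hμ hpa had hdq hμa rfl hxy
        (lt_prefixCount_of_notMem_tightArcs hxy hpenc hnt)⟩
    rw [prefixCount_swap_conj hμ hpa had hdq hμa rfl]
    omega
  refine ⟨mem_filter.2 ⟨mem_univ _, hpa, hν⟩, mem_filter.2 ⟨mem_univ _, hdq, ?_⟩⟩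
  rwa [swap_conj_eq_swap_conj hμ hpa had hdq hμa rfl]

theorem card_edgeTranspositions_le_of_delete (h : IsPairDeletion ι a d) {μ π : Perm (Fin N)}
    {μ' π' : Perm (Fin m)} (hμ : DeletesArc ι a d μ μ') (hπ : DeletesArc ι a d π π')
    (hμinv : Involutive μ) (hπinv : Involutive π)
    (hxy : ∀ i k, prefixCount μ i k ≤ prefixCount π i k) :
    #(edgeTranspositions μ' π') + 2 * #(enclosingArcs a d μ \ tightArcs a d π μ a) ≤
      #(edgeTranspositions μ π) := by
  set G := enclosingArcs a d μ \ tightArcs a d π μ a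
  have hnew := fun p (hp : p ∈ G) =>
    mem_edgeTranspositions_of_notMem_tightArcs hμinv hπinv h.lt hμ.apply_left hxy hp
  set e : Fin m ↪ Fin N := ⟨ι, h.strictMono.injective⟩
  set S₁ := (edgeTranspositions μ' π').map (e.prodMap e)
  set S₂ := G.map (Embedding.sectL _ a)
  set S₃ := G.map (μ.toEmbedding.trans (Embedding.sectR d _))
  have h₁₂ : Disjoint S₁ S₂ := by
    simp only [S₁, S₂, disjoint_left, mem_map]
    rintro _ ⟨t, -, rfl⟩ ⟨p, -, hp⟩
    exact (h.apply_ne t.2).1 (congrArg Prod.snd hp).symm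
  have h₁₃ : Disjoint S₁ S₃ := by
    simp only [S₁, S₃, disjoint_left, mem_map]
    rintro _ ⟨t, -, rfl⟩ ⟨p, -, hp⟩
    exact (h.apply_ne t.1).2 (congrArg Prod.fst hp).symm
  have h₂₃ : Disjoint S₂ S₃ := by
    simp only [S₂, S₃, disjoint_left, mem_map]
    rintro _ ⟨p, hp, rfl⟩ ⟨p', -, hp'⟩
    have hdp : d = p := congrArg Prod.fst hp'
    have := (mem_filter.1 (mem_sdiff.1 hp).1).2.1
    have := h.lt
    omega
  have hsub : S₁ ∪ S₂ ∪ S₃ ⊆ edgeTranspositions μ π := by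
    refine union_subset (union_subset ?_ ?_) ?_ <;> intro t ht <;>
      obtain ⟨s, hs, rfl⟩ := mem_map.1 ht
    exacts [map_mem_edgeTranspositions h hμ hπ hs, (hnew s hs).1, (hnew s hs).2]
  calc #(edgeTranspositions μ' π') + 2 * #G = #(S₁ ∪ S₂ ∪ S₃) := by
        rw [card_union_of_disjoint (disjoint_union_left.2 ⟨h₁₃, h₂₃⟩),
          card_union_of_disjoint h₁₂]
        simp only [S₁, S₂, S₃, card_map]
        ring
    _ ≤ #(edgeTranspositions μ π) := card_le_card hsub

end Degree

end BruhatGraph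

open BruhatGraph

theorem stmt_9_general (n : ℕ) (π μ : Equiv.Perm (Fin (2*(n+1))))
    (hπinv : ∀ i, π (π i) = i)
    (hμinv : ∀ i, μ (μ i) = i)
    (hle : revLE μ π)
    (a d : Fin (2*(n+1))) (had : a < d) (hπad : π a = d) (hμad : μ a = d)
    (π' μ' : Equiv.Perm (Fin (2*n)))
    (ι : Fin (2*n) → Fin (2*(n+1))) (hmono : StrictMono ι)
    (havoid : ∀ j, ι j ≠ a ∧ ι j ≠ d)
    (hπdel : ∀ j, π (ι j) = ι (π' j)) (hμdel : ∀ j, μ (ι j) = ι (μ' j)) :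
    rk n π' - rk n μ' < (deg μ' π' : ℤ) →
    rk (n+1) π - rk (n+1) μ < (deg μ π : ℤ) := by
  intro hirregular
  have h : IsPairDeletion ι a d := isPairDeletion_of_card (by ring) hmono havoid had
  have hπ : DeletesArc ι a d π π' := ⟨hπad, by rw [← hπad, hπinv], hπdel⟩
  have hμ : DeletesArc ι a d μ μ' := ⟨hμad, by rw [← hμad, hμinv], hμdel⟩
  have hxy := (bruhatLE_iff_prefixCount π μ).1 hle
  have hrkπ := rk_delete h hπ hπinv
  have hrkμ := rk_delete h hμ hμinv
  have hdeg := card_edgeTranspositions_le_of_delete h hμ hπ hμinv hπinv hxy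
  have henc := card_enclosingArcs_le_add (a := a) (d := d) hxy
  rw [deg_eq_card_edgeTranspositions] at hirregular ⊢
  omega

/-- If after deleting a commonly flipped pair a < d the vertex μ' is irregular in
BG_{μ',π'}, then μ is irregular in BG_{μ,π}. -/
theorem stmt_9 (n : ℕ) (π μ : Equiv.Perm (Fin (2*(n+1))))
    (hπinv : ∀ i, π (π i) = i) (hπfpf : ∀ i, π i ≠ i)
    (hμinv : ∀ i, μ (μ i) = i) (hμfpf : ∀ i, μ i ≠ i)
    (hle : revLE μ π)
    (a d : Fin (2*(n+1))) (had : a < d) (hπad : π a = d) (hμad : μ a = d)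
    (π' μ' : Equiv.Perm (Fin (2*n)))
    (hπ'inv : ∀ i, π' (π' i) = i) (hπ'fpf : ∀ i, π' i ≠ i)
    (hμ'inv : ∀ i, μ' (μ' i) = i) (hμ'fpf : ∀ i, μ' i ≠ i)
    (ι : Fin (2*n) → Fin (2*(n+1))) (hmono : StrictMono ι)
    (havoid : ∀ j, ι j ≠ a ∧ ι j ≠ d)
    (hπdel : ∀ j, π (ι j) = ι (π' j)) (hμdel : ∀ j, μ (ι j) = ι (μ' j)) :
    rk n π' - rk n μ' < (deg μ' π' : ℤ) →
    rk (n+1) π - rk (n+1) μ < (deg μ π : ℤ) :=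
  stmt_9_general n π μ hπinv hμinv hle a d had hπad hμad π' μ' ι hmono havoid hπdel hμdel
end
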